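/- Let e_j be the trigonometric basis of L²[−1,1] and χ_η the mollified indicator kernel, and set ē_j(f) = ∫_{−1}^1 e_j²(v) f(v) dv, ψ_j(η, y) = ē_j²(χ_η) y / (ē_j(χ_η²) y + 1), and Ψ_N(y_1,…,y_N) = Σ_{j=1}^N y_j/(y_j + 1). Then lim_{η→0} sup_{N≥1} sup_{(y_1,…,y_N) ∈ (0,∞)^N} | Σ_{j=1}^N ψ_j(η, y_j) / Ψ_N(y_1,…,y_N) − 1 | = 0. -/

import Mathlib

open Finset Filter MeasureTheory

/-- Trigonometric basis on `[−1,1]`: `e 1 = 1/√2`, and for `j ≥ 2`,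
`e j x = cos(π[j/2]x)` if `j` is even, `sin(π[j/2]x)` if `j` is odd. -/
noncomputable def eB (j : ℕ) (x : ℝ) : ℝ :=
  if j = 1 then 1 / Real.sqrt 2
  else if j % 2 = 0 then Real.cos (Real.pi * (j / 2 : ℕ) * x)
  else Real.sin (Real.pi * (j / 2 : ℕ) * x)

/-- Mollified indicator of `[−(1−η), 1−η]`. -/
noncomputable def chiEta (V : ℝ → ℝ) (η x : ℝ) : ℝ :=
  η⁻¹ * ∫ u in (-(1 - η) : ℝ)..(1 - η), V ((u - x) / η)

/-- `ē_j(f) = ∫_{−1}^1 e_j²(v) f(v) dv`. -/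
noncomputable def eBar (j : ℕ) (f : ℝ → ℝ) : ℝ :=
  ∫ v in (-1:ℝ)..1, (eB j v) ^ 2 * f v

/-- `ψ_j(η,y) = ē_j²(χ_η) y / (ē_j(χ_η²) y + 1)`. -/
noncomputable def psiF (V : ℝ → ℝ) (η : ℝ) (j : ℕ) (y : ℝ) : ℝ :=
  (eBar j (chiEta V η)) ^ 2 * y / ((eBar j (fun v => (chiEta V η v) ^ 2)) * y + 1)

/-! ### Auxiliary lemmas -/

section Aux

lemma chi_eq' (V : ℝ → ℝ) {η : ℝ} (hη : 0 < η) (x : ℝ) :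
    chiEta V η x = ∫ t in ((-(1 - η) - x) / η)..((1 - η - x) / η), V t := by
  unfold chiEta
  have h1 : (∫ u in (-(1 - η) : ℝ)..(1 - η), V ((u - x) / η))
      = ∫ u in (-(1 - η) - x : ℝ)..(1 - η - x), V (u / η) := by
    rw [← intervalIntegral.integral_comp_sub_right (fun u => V (u / η)) x]
  rw [h1, intervalIntegral.integral_comp_div (fun u => V u) hη.ne', smul_eq_mul,
    ← mul_assoc, inv_mul_cancel₀ hη.ne', one_mul]

variable {V : ℝ → ℝ} {η : ℝ}

lemma V_zero_left (hVsupp : ∀ u : ℝ, 1 ≤ |u| → V u = 0)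
    {c : ℝ} (hc : c ≤ -1) : (∫ t in c..(-1:ℝ), V t) = 0 := by
  rw [intervalIntegral.integral_congr (g := fun _ => 0), intervalIntegral.integral_zero]
  intro t ht
  rw [Set.uIcc_of_le hc] at ht
  exact hVsupp t (by rw [abs_of_nonpos (ht.2.trans (by norm_num))]; linarith [ht.2])

lemma V_zero_right (hVsupp : ∀ u : ℝ, 1 ≤ |u| → V u = 0)
    {d : ℝ} (hd : 1 ≤ d) : (∫ t in (1:ℝ)..d, V t) = 0 := by
  rw [intervalIntegral.integral_congr (g := fun _ => 0), intervalIntegral.integral_zero]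
  intro t ht
  rw [Set.uIcc_of_le hd] at ht
  exact hVsupp t (by rw [abs_of_nonneg (le_trans (by norm_num) ht.1)]; exact ht.1)

lemma V_int_super (hVsupp : ∀ u : ℝ, 1 ≤ |u| → V u = 0) (hVc : Continuous V)
    (hVint : (∫ u in (-1:ℝ)..1, V u) = 1)
    {c d : ℝ} (hc : c ≤ -1) (hd : 1 ≤ d) : (∫ t in c..d, V t) = 1 := by
  have i1 : IntervalIntegrable V volume c (-1) := hVc.intervalIntegrable _ _
  have i2 : IntervalIntegrable V volume (-1) 1 := hVc.intervalIntegrable _ _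
  have i3 : IntervalIntegrable V volume 1 d := hVc.intervalIntegrable _ _
  rw [← intervalIntegral.integral_add_adjacent_intervals (i1.trans i2) i3,
    ← intervalIntegral.integral_add_adjacent_intervals i1 i2,
    V_zero_left hVsupp hc, V_zero_right hVsupp hd, hVint]
  norm_num

lemma V_int_le (hV0 : ∀ u, 0 ≤ V u) (hVsupp : ∀ u : ℝ, 1 ≤ |u| → V u = 0)
    (hVc : Continuous V) (hVint : (∫ u in (-1:ℝ)..1, V u) = 1)
    {c d : ℝ} (hcd : c ≤ d) : (∫ t in c..d, V t) ≤ 1 := by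
  have := intervalIntegral.integral_mono_interval (μ := volume) (f := V)
    (min_le_left c (-1)) hcd (le_max_left d 1)
    (Filter.Eventually.of_forall fun t => hV0 t) (hVc.intervalIntegrable _ _)
  calc (∫ t in c..d, V t) ≤ ∫ t in (min c (-1))..(max d 1), V t := this
    _ = 1 := V_int_super hVsupp hVc hVint (min_le_right _ _) (le_max_right _ _)

lemma chi_cd (hη : 0 < η) (hη2 : η < 1/2) (x : ℝ) :
    (-(1 - η) - x) / η ≤ (1 - η - x) / η := by
  exact div_le_div_of_nonneg_right (by linarith) hη.le

lemma chi_nonneg (hV0 : ∀ u, 0 ≤ V u) (hη : 0 < η) (hη2 : η < 1/2) (x : ℝ) :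
    0 ≤ chiEta V η x := by
  rw [chi_eq' V hη x]
  exact intervalIntegral.integral_nonneg (chi_cd hη hη2 x) fun t _ => hV0 t

lemma chi_le_one (hV0 : ∀ u, 0 ≤ V u) (hVsupp : ∀ u : ℝ, 1 ≤ |u| → V u = 0)
    (hVc : Continuous V) (hVint : (∫ u in (-1:ℝ)..1, V u) = 1)
    (hη : 0 < η) (hη2 : η < 1/2) (x : ℝ) : chiEta V η x ≤ 1 := by
  rw [chi_eq' V hη x]
  exact V_int_le hV0 hVsupp hVc hVint (chi_cd hη hη2 x)

lemma chi_eq_one (hVsupp : ∀ u : ℝ, 1 ≤ |u| → V u = 0) (hVc : Continuous V)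
    (hVint : (∫ u in (-1:ℝ)..1, V u) = 1)
    (hη : 0 < η) {x : ℝ} (hx : |x| ≤ 1 - 2*η) : chiEta V η x = 1 := by
  rw [chi_eq' V hη x]
  rw [abs_le] at hx
  refine V_int_super hVsupp hVc hVint ?_ ?_
  · rw [div_le_iff₀ hη]; linarith [hx.2]
  · rw [le_div_iff₀ hη]; linarith [hx.1]

lemma chi_continuous (hVc : Continuous V) (hη : 0 < η) :
    Continuous (chiEta V η) := by
  have hF : Continuous fun b : ℝ => ∫ t in (0:ℝ)..b, V t :=
    intervalIntegral.continuous_primitive (fun a b => hVc.intervalIntegrable a b) 0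
  have h2 : chiEta V η = fun x => (∫ t in (0:ℝ)..((1 - η - x) / η), V t)
      - ∫ t in (0:ℝ)..((-(1 - η) - x) / η), V t := by
    funext x
    rw [chi_eq' V hη x, intervalIntegral.integral_interval_sub_left
      (hVc.intervalIntegrable _ _) (hVc.intervalIntegrable _ _)]
  rw [h2]
  exact ((hF.comp (by fun_prop)).sub (hF.comp (by fun_prop)))

lemma eB_continuous (j : ℕ) : Continuous (eB j) := by
  unfold eB
  split_ifs <;> fun_prop

lemma eB_sq_le_one (j : ℕ) (x : ℝ) : (eB j x) ^ 2 ≤ 1 := by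
  unfold eB
  split_ifs
  · rw [div_pow, one_pow, Real.sq_sqrt (by norm_num)]
    norm_num
  · calc Real.cos _ ^ 2 ≤ Real.cos _ ^ 2 + Real.sin _ ^ 2 := le_add_of_nonneg_right (sq_nonneg _)
      _ = 1 := by rw [add_comm]; exact Real.sin_sq_add_cos_sq _
  · calc Real.sin _ ^ 2 ≤ Real.sin _ ^ 2 + Real.cos _ ^ 2 := le_add_of_nonneg_right (sq_nonneg _)
      _ = 1 := Real.sin_sq_add_cos_sq _

lemma cos_sq_int (k : ℕ) (hk : 1 ≤ k) :
    (∫ v in (-1:ℝ)..1, Real.cos (Real.pi * k * v) ^ 2) = 1 := by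
  have hpk : (Real.pi * k) ≠ 0 := by positivity
  have hs : Real.sin (Real.pi * k) = 0 := by
    rw [mul_comm]; exact Real.sin_nat_mul_pi k
  rw [intervalIntegral.integral_comp_mul_left (fun t => Real.cos t ^ 2) hpk]
  rw [integral_cos_sq]
  simp [hs]
  have hk0 : (k:ℝ) ≠ 0 := Nat.cast_ne_zero.mpr (by omega)
  field_simp

lemma sin_sq_int (k : ℕ) (hk : 1 ≤ k) :
    (∫ v in (-1:ℝ)..1, Real.sin (Real.pi * k * v) ^ 2) = 1 := by
  have hpk : (Real.pi * k) ≠ 0 := by positivity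
  have hs : Real.sin (Real.pi * k) = 0 := by
    rw [mul_comm]; exact Real.sin_nat_mul_pi k
  rw [intervalIntegral.integral_comp_mul_left (fun t => Real.sin t ^ 2) hpk]
  rw [integral_sin_sq]
  simp [hs]
  have hk0 : (k:ℝ) ≠ 0 := Nat.cast_ne_zero.mpr (by omega)
  field_simp

lemma eB_sq_int (j : ℕ) (hj : 1 ≤ j) : (∫ v in (-1:ℝ)..1, (eB j v) ^ 2) = 1 := by
  unfold eB
  rcases eq_or_lt_of_le hj with h1 | h2
  · simp only [← h1]
    norm_num
  · have hj1 : j ≠ 1 := by omega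
    have hk : 1 ≤ j / 2 := by omega
    simp only [hj1, if_false]
    split_ifs
    · exact cos_sq_int (j / 2) hk
    · exact sin_sq_int (j / 2) hk

lemma eBar_le_one {f : ℝ → ℝ} (hfc : Continuous f) (hf1 : ∀ v, f v ≤ 1)
    (hf0 : ∀ v, 0 ≤ f v) {j : ℕ} (hj : 1 ≤ j) : eBar j f ≤ 1 := by
  have h := intervalIntegral.integral_mono_on (μ := volume)
    (f := fun v => (eB j v)^2 * f v) (g := fun v => (eB j v)^2) (by norm_num : (-1:ℝ) ≤ 1)
    ((((eB_continuous j).pow 2).mul hfc).intervalIntegrable _ _)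
    ((((eB_continuous j).pow 2)).intervalIntegrable _ _)
    (fun x _ => by
      calc (eB j x)^2 * f x ≤ (eB j x)^2 * 1 :=
        mul_le_mul_of_nonneg_left (hf1 x) (sq_nonneg _)
      _ = (eB j x)^2 := mul_one _)
  calc eBar j f ≤ ∫ v in (-1:ℝ)..1, (eB j v)^2 := h
    _ = 1 := eB_sq_int j hj

lemma eBar_ge {f : ℝ → ℝ} (hη : 0 < η) (hη2 : η < 1/2) (hfc : Continuous f)
    (hf0 : ∀ v, 0 ≤ f v) (hfm : ∀ v : ℝ, |v| ≤ 1 - 2*η → f v = 1)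
    {j : ℕ} (hj : 1 ≤ j) : 1 - 4*η ≤ eBar j f := by
  have hE : Continuous (fun v => (eB j v)^2) := (eB_continuous j).pow 2
  have key : (∫ v in (-(1-2*η):ℝ)..(1-2*η), (eB j v)^2) ≤ eBar j f := by
    have h1 : (∫ v in (-(1-2*η):ℝ)..(1-2*η), (eB j v)^2)
        = ∫ v in (-(1-2*η):ℝ)..(1-2*η), (eB j v)^2 * f v := by
      apply intervalIntegral.integral_congr
      intro v hv
      rw [Set.uIcc_of_le (by linarith)] at hv
      simp only []
      rw [hfm v (abs_le.mpr ⟨hv.1, hv.2⟩), mul_one]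
    rw [h1]
    apply intervalIntegral.integral_mono_interval (by linarith) (by linarith) (by linarith)
      (Filter.Eventually.of_forall fun v => mul_nonneg (sq_nonneg _) (hf0 v))
      ((hE.mul hfc).intervalIntegrable _ _)
  have edge : ∀ a b : ℝ, a ≤ b → (∫ v in a..b, (eB j v)^2) ≤ b - a := by
    intro a b hab
    have := intervalIntegral.integral_mono_on (μ := volume) hab
      (hE.intervalIntegrable _ _) (_root_.intervalIntegrable_const (c := (1:ℝ)))
      (fun x _ => eB_sq_le_one j x)
    simpa using this
  have split : (∫ v in (-1:ℝ)..(-(1-2*η)), (eB j v)^2)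
      + (∫ v in (-(1-2*η):ℝ)..(1-2*η), (eB j v)^2)
      + (∫ v in (1-2*η:ℝ)..1, (eB j v)^2) = 1 := by
    rw [intervalIntegral.integral_add_adjacent_intervals
        (hE.intervalIntegrable _ _) (hE.intervalIntegrable _ _),
      intervalIntegral.integral_add_adjacent_intervals
        (hE.intervalIntegrable _ _) (hE.intervalIntegrable _ _)]
    exact eB_sq_int j hj
  have e1 := edge (-1) (-(1-2*η)) (by linarith)
  have e2 := edge (1-2*η) 1 (by linarith)
  have : 1 - 4*η ≤ ∫ v in (-(1-2*η):ℝ)..(1-2*η), (eB j v)^2 := by linarith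
  linarith [key]

lemma frac_bounds {a b y : ℝ} (hη : 0 < η) (hη8 : η ≤ 1/8)
    (ha1 : 1 - 4*η ≤ a) (ha2 : a ≤ 1) (hb1 : 1 - 4*η ≤ b) (hb2 : b ≤ 1) (hy : 0 < y) :
    (1 - 4*η)^2 * (y/(y+1)) ≤ a^2 * y/(b*y+1) ∧
      a^2 * y/(b*y+1) ≤ (1/(1-4*η)) * (y/(y+1)) := by
  have h14 : (0:ℝ) < 1 - 4*η := by linarith
  have hb0 : 0 < b := by linarith
  have hden : 0 < b*y + 1 := by positivity
  have hy1 : 0 < y + 1 := by linarith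
  have haa : a^2 ≤ 1 := by nlinarith
  have h2 : (1-4*η)*(y+1) ≤ b*y+1 := by nlinarith
  have hinv : (1/(1-4*η)) * (1-4*η) = 1 := by field_simp
  have hc0 : 0 ≤ 1/(1-4*η) := by positivity
  constructor
  · rw [← mul_div_assoc, div_le_div_iff₀ hy1 hden]
    have h3 : (1-4*η)^2 ≤ a^2 := by nlinarith
    have hby : b*y+1 ≤ y+1 := by nlinarith
    calc (1-4*η)^2*y*(b*y+1) ≤ a^2*y*(b*y+1) :=
          mul_le_mul_of_nonneg_right (mul_le_mul_of_nonneg_right h3 hy.le) hden.le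
      _ ≤ a^2*y*(y+1) := mul_le_mul_of_nonneg_left hby (by positivity)
  · rw [← mul_div_assoc, div_le_div_iff₀ hden hy1]
    calc a^2*y*(y+1) ≤ 1*(y*(y+1)) := by nlinarith [mul_pos hy hy1]
      _ = ((1/(1-4*η))*(1-4*η))*(y*(y+1)) := by rw [hinv]
      _ = (1/(1-4*η))*y*((1-4*η)*(y+1)) := by ring
      _ ≤ (1/(1-4*η))*y*(b*y+1) := mul_le_mul_of_nonneg_left h2 (by positivity)

lemma main_est (hVc : Continuous V) (hV0 : ∀ u, 0 ≤ V u)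
    (hVsupp : ∀ u : ℝ, 1 ≤ |u| → V u = 0) (hVint : (∫ u in (-1:ℝ)..1, V u) = 1)
    (hη : 0 < η) (hη8 : η < 1/8) {N : ℕ} (hN : 1 ≤ N) {y : ℕ → ℝ}
    (hy : ∀ j ∈ Finset.Icc 1 N, 0 < y j) :
    |(∑ j ∈ Finset.Icc 1 N, psiF V η j (y j))
      / (∑ j ∈ Finset.Icc 1 N, y j / (y j + 1)) - 1| ≤ 8*η := by
  have hη2 : η < 1/2 := by linarith
  have h14 : (0:ℝ) < 1 - 4*η := by linarith
  have hccont := chi_continuous hVc hη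
  have hc0 := chi_nonneg hV0 hη hη2
  have hc1 := chi_le_one hV0 hVsupp hVc hVint hη hη2
  have hceq : ∀ x : ℝ, |x| ≤ 1 - 2*η → chiEta V η x = 1 :=
    fun x hx => chi_eq_one hVsupp hVc hVint hη hx
  -- bounds on a j and b j
  have hbnd : ∀ j ∈ Finset.Icc 1 N,
      (1 - 4*η ≤ eBar j (chiEta V η) ∧ eBar j (chiEta V η) ≤ 1) ∧
      (1 - 4*η ≤ eBar j (fun v => (chiEta V η v)^2) ∧
        eBar j (fun v => (chiEta V η v)^2) ≤ 1) := by
    intro j hj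
    have hj1 : 1 ≤ j := (Finset.mem_Icc.mp hj).1
    refine ⟨⟨eBar_ge hη hη2 hccont hc0 hceq hj1,
      eBar_le_one hccont hc1 hc0 hj1⟩,
      ⟨eBar_ge hη hη2 (hccont.pow 2) (fun v => sq_nonneg _)
        (fun v hv => by rw [Pi.pow_apply, hceq v hv, one_pow]) hj1,
      eBar_le_one (hccont.pow 2) (fun v => pow_le_one₀ (hc0 v) (hc1 v))
        (fun v => sq_nonneg _) hj1⟩⟩
  set T := ∑ j ∈ Finset.Icc 1 N, y j / (y j + 1) with hTdef
  have hT : 0 < T := by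
    apply Finset.sum_pos
    · intro j hj
      have := hy j hj
      positivity
    · exact ⟨1, Finset.mem_Icc.mpr ⟨le_refl 1, hN⟩⟩
  have hterm : ∀ j ∈ Finset.Icc 1 N,
      (1 - 4*η)^2 * (y j/(y j+1)) ≤ psiF V η j (y j) ∧
      psiF V η j (y j) ≤ (1/(1-4*η)) * (y j/(y j+1)) := by
    intro j hj
    obtain ⟨⟨ha1, ha2⟩, hb1, hb2⟩ := hbnd j hj
    exact frac_bounds hη hη8.le ha1 ha2 hb1 hb2 (hy j hj)
  have hlow : (1 - 4*η)^2 * T ≤ ∑ j ∈ Finset.Icc 1 N, psiF V η j (y j) := by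
    rw [hTdef, Finset.mul_sum]
    exact Finset.sum_le_sum fun j hj => (hterm j hj).1
  have hup : (∑ j ∈ Finset.Icc 1 N, psiF V η j (y j)) ≤ (1/(1-4*η)) * T := by
    rw [hTdef, Finset.mul_sum]
    exact Finset.sum_le_sum fun j hj => (hterm j hj).2
  rw [abs_le]
  constructor
  · have : 1 - 8*η ≤ (∑ j ∈ Finset.Icc 1 N, psiF V η j (y j)) / T := by
      rw [le_div_iff₀ hT]
      calc (1 - 8*η) * T ≤ (1 - 4*η)^2 * T := by nlinarith [sq_nonneg η, hT.le]
        _ ≤ _ := hlow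
    linarith
  · have h1 : (1:ℝ)/(1-4*η) ≤ 1 + 8*η := by
      rw [div_le_iff₀ h14]
      nlinarith
    have : (∑ j ∈ Finset.Icc 1 N, psiF V η j (y j)) / T ≤ 1 + 8*η := by
      rw [div_le_iff₀ hT]
      calc (∑ j ∈ Finset.Icc 1 N, psiF V η j (y j)) ≤ (1/(1-4*η)) * T := hup
        _ ≤ (1 + 8*η) * T := mul_le_mul_of_nonneg_right h1 hT.le
    linarith

end Aux

/-- Uniformly over `N ≥ 1` and positive `y_1,…,y_N`, the ratio
`∑_j ψ_j(η, y_j) / ∑_j y_j/(y_j+1)` tends to `1` as `η → 0`. -/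
theorem stmt17 (V : ℝ → ℝ) (hV : ContDiff ℝ (⊤ : ℕ∞) V) (hV0 : ∀ u, 0 ≤ V u)
    (hVsupp : ∀ u : ℝ, 1 ≤ |u| → V u = 0) (hVint : (∫ u in (-1:ℝ)..1, V u) = 1) :
    Tendsto (fun η =>
        sSup {w | ∃ N : ℕ, 1 ≤ N ∧ ∃ y : ℕ → ℝ, (∀ j ∈ Finset.Icc 1 N, 0 < y j) ∧
          w = |(∑ j ∈ Finset.Icc 1 N, psiF V η j (y j))
                / (∑ j ∈ Finset.Icc 1 N, y j / (y j + 1)) - 1|})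
      (nhdsWithin 0 (Set.Ioo 0 (1/2))) (nhds 0) := by
  have hVc : Continuous V := hV.continuous
  have h8 : Tendsto (fun η : ℝ => 8*η) (nhdsWithin 0 (Set.Ioo 0 (1/2))) (nhds 0) := by
    have : Tendsto (fun η : ℝ => 8*η) (nhds 0) (nhds (8*0)) :=
      (continuous_const.mul continuous_id).tendsto 0
    rw [mul_zero] at this
    exact this.mono_left nhdsWithin_le_nhds
  have hev : ∀ᶠ η in nhdsWithin (0:ℝ) (Set.Ioo 0 (1/2)), 0 < η ∧ η < 1/8 := by
    filter_upwards [self_mem_nhdsWithin,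
      Filter.eventually_iff_exists_mem.mpr
        ⟨Set.Iio (1/8), nhdsWithin_le_nhds (Iio_mem_nhds (by norm_num)),
          fun x hx => hx⟩] with η h1 h2
    exact ⟨h1.1, h2⟩
  apply tendsto_of_tendsto_of_tendsto_of_le_of_le' tendsto_const_nhds h8
  · -- 0 ≤ sSup
    filter_upwards [hev] with η hη
    obtain ⟨hη0, hη8⟩ := hη
    set s := {w | ∃ N : ℕ, 1 ≤ N ∧ ∃ y : ℕ → ℝ, (∀ j ∈ Finset.Icc 1 N, 0 < y j) ∧
      w = |(∑ j ∈ Finset.Icc 1 N, psiF V η j (y j))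
        / (∑ j ∈ Finset.Icc 1 N, y j / (y j + 1)) - 1|} with hs
    have hmem : |(∑ j ∈ Finset.Icc 1 1, psiF V η j ((fun _ => (1:ℝ)) j))
        / (∑ j ∈ Finset.Icc 1 1, (fun _ => (1:ℝ)) j / ((fun _ => (1:ℝ)) j + 1)) - 1| ∈ s :=
      ⟨1, le_refl 1, fun _ => (1:ℝ), fun j _ => one_pos, rfl⟩
    have hbdd : BddAbove s := by
      refine ⟨8*η, fun w hw => ?_⟩
      obtain ⟨N, hN, y, hy, rfl⟩ := hw
      exact main_est hVc hV0 hVsupp hVint hη0 hη8 hN hy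
    calc (0:ℝ) ≤ |(∑ j ∈ Finset.Icc 1 1, psiF V η j ((fun _ => (1:ℝ)) j))
        / (∑ j ∈ Finset.Icc 1 1, (fun _ => (1:ℝ)) j / ((fun _ => (1:ℝ)) j + 1)) - 1| :=
        abs_nonneg _
      _ ≤ sSup s := le_csSup hbdd hmem
  · -- sSup ≤ 8η
    filter_upwards [hev] with η hη
    obtain ⟨hη0, hη8⟩ := hη
    apply csSup_le
    · exact ⟨_, 1, le_refl 1, fun _ => (1:ℝ), fun j _ => one_pos, rfl⟩
    · rintro w ⟨N, hN, y, hy, rfl⟩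
      exact main_est hVc hV0 hVsupp hVint hη0 hη8 hN hy
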